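/- Let s ∈ {1,−1}, γ⁰ = σ₃, γ¹ = i s σ₁, γ² = i σ₂, m ∈ ℝ, and let a₀, a₁, a₂ : ℝ → ℝ be smooth. On the domain Ω = {x ∈ ℝ³ : |x⁰| > |x²|}, with u₀ = √((x⁰)² − (x²)²), define the potential A₀ = (x⁰/u₀) a₀(u₀) − (x²/u₀²) a₂(u₀), A₁ = a₁(u₀), A₂ = −(x²/u₀) a₀(u₀) + (x⁰/u₀²) a₂(u₀), and the Dirac operator H = γ⁰(i∂₀ − A₀) + γ¹(i∂₁ − A₁) + γ²(i∂₂ − A₂) − m. Then the boost symmetry operator K = i(x⁰ ∂₂ + x² ∂₀) − (i/2) σ₁ commutes with H: for every smooth ψ : Ω → ℂ², K(Hψ) = H(Kψ). -/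

import Mathlib

open Matrix

noncomputable section

abbrev M2 : Type := Matrix (Fin 2) (Fin 2) ℂ

/-- Pauli matrices -/
def pauli1 : M2 := !![0, 1; 1, 0]
def pauli2 : M2 := !![0, -Complex.I; Complex.I, 0]
def pauli3 : M2 := !![1, 0; 0, -1]

/-- The gamma matrices γ⁰ = σ₃, γ¹ = i s σ₁, γ² = i σ₂. -/
def gamma (s : ℝ) : Fin 3 → M2 :=
  ![pauli3, (Complex.I * (s : ℂ)) • pauli1, Complex.I • pauli2]

/-- Partial derivative ∂_ν of a ℂ²-valued function on ℝ³. -/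
def pdC (ν : Fin 3) (f : (Fin 3 → ℝ) → (Fin 2 → ℂ)) (x : Fin 3 → ℝ) : Fin 2 → ℂ :=
  fderiv ℝ f x (Pi.single ν 1)

/-- The (2+1)-dimensional Dirac operator
H = γ⁰(i∂₀ − A₀) + γ¹(i∂₁ − A₁) + γ²(i∂₂ − A₂) − m. -/
def diracOp (s : ℝ) (A : Fin 3 → (Fin 3 → ℝ) → ℝ) (m : ℝ)
    (ψ : (Fin 3 → ℝ) → (Fin 2 → ℂ)) : (Fin 3 → ℝ) → (Fin 2 → ℂ) :=
  fun x => (∑ ν, (gamma s ν).mulVec (Complex.I • pdC ν ψ x - (A ν x : ℂ) • ψ x))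
    - (m : ℂ) • ψ x

/-- u₀ = √((x⁰)² − (x²)²). -/
def u₀ (x : Fin 3 → ℝ) : ℝ := Real.sqrt ((x 0) ^ 2 - (x 2) ^ 2)

/-- The boost-covariant potential on the domain |x⁰| > |x²|. -/
def boostPot (a₀ a₁ a₂ : ℝ → ℝ) : Fin 3 → (Fin 3 → ℝ) → ℝ :=
  ![fun x => (x 0 / u₀ x) * a₀ (u₀ x) - (x 2 / (u₀ x) ^ 2) * a₂ (u₀ x),
    fun x => a₁ (u₀ x),
    fun x => -(x 2 / u₀ x) * a₀ (u₀ x) + (x 0 / (u₀ x) ^ 2) * a₂ (u₀ x)]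

/-- The boost symmetry operator K = i(x⁰∂₂ + x²∂₀) − (i/2)σ₁. -/
def boostOp (ψ : (Fin 3 → ℝ) → (Fin 2 → ℂ)) : (Fin 3 → ℝ) → (Fin 2 → ℂ) :=
  fun x => Complex.I • (x 0 • pdC 2 ψ x + x 2 • pdC 0 ψ x)
    - (Complex.I / 2) • pauli1.mulVec (ψ x)

/-! ### Auxiliary material -/

abbrev pr (i : Fin 3) : (Fin 3 → ℝ) →L[ℝ] ℝ :=
  ContinuousLinearMap.proj (R := ℝ) (φ := fun _ : Fin 3 => ℝ) i

/-- Matrix `mulVec` as a real-continuous-linear map. -/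
def mvCLM (Γ : M2) : (Fin 2 → ℂ) →L[ℝ] (Fin 2 → ℂ) :=
  LinearMap.toContinuousLinearMap ((Matrix.mulVecLin Γ).restrictScalars ℝ)

@[simp] theorem mvCLM_apply (Γ : M2) (w : Fin 2 → ℂ) : mvCLM Γ w = Γ.mulVec w := rfl

theorem hasFDerivAt_u₀ (x : Fin 3 → ℝ) (hx : |x 0| > |x 2|) :
    HasFDerivAt u₀ ((x 0 / u₀ x) • pr 0 - (x 2 / u₀ x) • pr 2) x := by
  have hq : (0:ℝ) < (x 0)^2 - (x 2)^2 := by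
    nlinarith [sq_abs (x 0), sq_abs (x 2), abs_nonneg (x 2),
      mul_self_lt_mul_self (abs_nonneg (x 2)) hx]
  have h0 : HasFDerivAt (fun y : Fin 3 → ℝ => y 0) (pr 0) x := (pr 0).hasFDerivAt
  have h2 : HasFDerivAt (fun y : Fin 3 → ℝ => y 2) (pr 2) x := (pr 2).hasFDerivAt
  have hq' : HasFDerivAt (fun y : Fin 3 → ℝ => (y 0)^2 - (y 2)^2)
      (x 0 • pr 0 + x 0 • pr 0 - (x 2 • pr 2 + x 2 • pr 2)) x := by
    simpa only [pow_two, Pi.mul_def, Pi.sub_def] using (h0.mul h0).sub (h2.mul h2)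
  have hu := (Real.hasDerivAt_sqrt (ne_of_gt hq)).comp_hasFDerivAt x hq'
  have hupos : 0 < u₀ x := Real.sqrt_pos.mpr hq
  refine hu.congr_fderiv ?_
  ext v
  simp only [ContinuousLinearMap.coe_sub', Pi.sub_apply, ContinuousLinearMap.coe_smul',
    Pi.smul_apply, smul_eq_mul, ContinuousLinearMap.coe_add', Pi.add_apply]
  have : Real.sqrt ((x 0)^2 - (x 2)^2) = u₀ x := rfl
  rw [this]
  field_simp
  ring

theorem u₀_pos (x : Fin 3 → ℝ) (hx : |x 0| > |x 2|) : 0 < u₀ x := by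
  have hq : (0:ℝ) < (x 0)^2 - (x 2)^2 := by
    nlinarith [sq_abs (x 0), sq_abs (x 2), abs_nonneg (x 2),
      mul_self_lt_mul_self (abs_nonneg (x 2)) hx]
  exact Real.sqrt_pos.mpr hq

set_option maxHeartbeats 1000000 in
theorem pot_deriv (a₀ a₁ a₂ : ℝ → ℝ) (ha₀ : ContDiff ℝ (⊤ : ℕ∞) a₀) (ha₁ : ContDiff ℝ (⊤ : ℕ∞) a₁)
    (ha₂ : ContDiff ℝ (⊤ : ℕ∞) a₂) (x : Fin 3 → ℝ) (hx : |x 0| > |x 2|) (ν : Fin 3) :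
    ∃ D : (Fin 3 → ℝ) →L[ℝ] ℝ,
      HasFDerivAt (boostPot a₀ a₁ a₂ ν) D x ∧
      x 0 * D (Pi.single 2 1) + x 2 * D (Pi.single 0 1) =
        -(![boostPot a₀ a₁ a₂ 2 x, 0, boostPot a₀ a₁ a₂ 0 x] ν) := by
  have hu := hasFDerivAt_u₀ x hx
  have hupos := u₀_pos x hx
  have hune : u₀ x ≠ 0 := ne_of_gt hupos
  have h0 : HasFDerivAt (fun y : Fin 3 → ℝ => y 0) (pr 0) x := (pr 0).hasFDerivAt
  have h2 : HasFDerivAt (fun y : Fin 3 → ℝ => y 2) (pr 2) x := (pr 2).hasFDerivAt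
  set Du := ((x 0 / u₀ x) • pr 0 - (x 2 / u₀ x) • pr 2) with hDu
  have ha0u : HasFDerivAt (fun y => a₀ (u₀ y)) (deriv a₀ (u₀ x) • Du) x :=
    (ha₀.differentiable (by simp) (u₀ x)).hasDerivAt.comp_hasFDerivAt x hu
  have ha1u : HasFDerivAt (fun y => a₁ (u₀ y)) (deriv a₁ (u₀ x) • Du) x :=
    (ha₁.differentiable (by simp) (u₀ x)).hasDerivAt.comp_hasFDerivAt x hu
  have ha2u : HasFDerivAt (fun y => a₂ (u₀ y)) (deriv a₂ (u₀ x) • Du) x :=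
    (ha₂.differentiable (by simp) (u₀ x)).hasDerivAt.comp_hasFDerivAt x hu
  have husq : HasFDerivAt (fun y => (u₀ y)^2) ((u₀ x) • Du + (u₀ x) • Du) x := by
    simpa only [pow_two, Pi.mul_def] using hu.mul hu
  have hinv : HasFDerivAt (fun y => (u₀ y)⁻¹) ((-(u₀ x ^ 2)⁻¹) • Du) x :=
    (hasDerivAt_inv hune).comp_hasFDerivAt x hu
  have hinv2 : HasFDerivAt (fun y => ((u₀ y) ^ 2)⁻¹)
      ((-((u₀ x ^ 2) ^ 2)⁻¹) • (u₀ x • Du + u₀ x • Du)) x :=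
    (hasDerivAt_inv (pow_ne_zero 2 hune)).comp_hasFDerivAt x husq
  have hDe0 : Du (Pi.single 0 1) = x 0 / u₀ x := by
    simp [hDu, Pi.single_apply]
  have hDe2 : Du (Pi.single 2 1) = -(x 2 / u₀ x) := by
    simp [hDu, Pi.single_apply]
  fin_cases ν
  · have hA0 := (((h0.mul hinv).mul ha0u).sub (((h2.mul hinv2).mul ha2u)))
    refine ⟨_, by simpa [boostPot, div_eq_mul_inv, Pi.mul_def, Pi.sub_def] using hA0, ?_⟩
    simp [hDe0, hDe2, Pi.single_apply, boostPot]
    field_simp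
    ring
  · refine ⟨_, by simpa [boostPot] using ha1u, ?_⟩
    simp [hDe0, hDe2, Pi.single_apply, boostPot]
    field_simp
    ring
  · have hA2 := (((((h2.mul hinv).mul ha0u)).neg).add (((h0.mul hinv2).mul ha2u)))
    refine ⟨_, by simpa [boostPot, div_eq_mul_inv, Pi.mul_def, Pi.add_def, Pi.neg_def] using hA2, ?_⟩
    simp [hDe0, hDe2, Pi.single_apply, boostPot]
    field_simp
    ring

set_option maxHeartbeats 4000000 in
/-- On the domain |x⁰| > |x²|, the boost symmetry operator K commutes with the
Dirac operator for the boost-covariant potential. -/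
theorem boost_commutes_with_dirac (s : ℝ) (hs : s = 1 ∨ s = -1) (m : ℝ)
    (a₀ a₁ a₂ : ℝ → ℝ) (ha₀ : ContDiff ℝ (⊤ : ℕ∞) a₀) (ha₁ : ContDiff ℝ (⊤ : ℕ∞) a₁)
    (ha₂ : ContDiff ℝ (⊤ : ℕ∞) a₂)
    (ψ : (Fin 3 → ℝ) → (Fin 2 → ℂ))
    (hψ : ContDiffOn ℝ (⊤ : ℕ∞) ψ {x : Fin 3 → ℝ | |x 0| > |x 2|}) :
    ∀ x ∈ {x : Fin 3 → ℝ | |x 0| > |x 2|},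
      boostOp (diracOp s (boostPot a₀ a₁ a₂) m ψ) x
        = diracOp s (boostPot a₀ a₁ a₂) m (boostOp ψ) x := by
  intro x hx
  have hxx : |x 0| > |x 2| := hx
  have hΩ : IsOpen {x : Fin 3 → ℝ | |x 0| > |x 2|} := by
    have : {x : Fin 3 → ℝ | |x 0| > |x 2|}
        = (fun x : Fin 3 → ℝ => |x 0| - |x 2|) ⁻¹' Set.Ioi 0 := by
      ext y; simp [sub_pos]
    rw [this]
    exact (Continuous.sub ((continuous_apply 0).abs)
      ((continuous_apply 2).abs)).isOpen_preimage _ isOpen_Ioi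
  have hnhds : {x : Fin 3 → ℝ | |x 0| > |x 2|} ∈ nhds x := hΩ.mem_nhds hx
  -- potential derivatives
  choose D hD hcomb using pot_deriv a₀ a₁ a₂ ha₀ ha₁ ha₂ x hxx
  set A := boostPot a₀ a₁ a₂ with hA
  -- ψ derivatives
  have hψ' : HasFDerivAt ψ (fderiv ℝ ψ x) x :=
    ((hψ.differentiableOn (by simp)).differentiableAt hnhds).hasFDerivAt
  have hψf : ContDiffOn ℝ (⊤ : ℕ∞) (fderiv ℝ ψ) {x : Fin 3 → ℝ | |x 0| > |x 2|} :=
    hψ.fderiv_of_isOpen hΩ (by simp)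
  have hfd : DifferentiableAt ℝ (fderiv ℝ ψ) x :=
    (hψf.differentiableOn (by simp)).differentiableAt hnhds
  have hpd : ∀ ν : Fin 3, HasFDerivAt (pdC ν ψ)
      ((ContinuousLinearMap.apply ℝ (Fin 2 → ℂ) (Pi.single ν 1)).comp
        (fderiv ℝ (fderiv ℝ ψ) x)) x := fun ν => by
    exact (ContinuousLinearMap.apply ℝ (Fin 2 → ℂ) (Pi.single ν 1)).hasFDerivAt.comp x
      hfd.hasFDerivAt
  have hsymm : ∀ v w, fderiv ℝ (fderiv ℝ ψ) x v w = fderiv ℝ (fderiv ℝ ψ) x w v :=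
    fun v w => (hψ.contDiffAt hnhds).isSymmSndFDerivAt (n := (⊤ : ℕ∞)) (by rw [minSmoothness_of_isRCLikeNormedField]; exact WithTop.coe_le_coe.mpr (le_top : (2 : ℕ∞) ≤ ⊤)) v w
  -- coerced potential
  have hcA : ∀ ν : Fin 3, HasFDerivAt (fun y => ((A ν y : ℝ) : ℂ))
      (Complex.ofRealCLM.comp (D ν)) x := fun ν =>
    Complex.ofRealCLM.hasFDerivAt.comp x (hD ν)
  -- derivative of the Dirac operator applied to ψ
  have hF : HasFDerivAt (diracOp s A m ψ)
      ((∑ ν, (mvCLM (gamma s ν)).comp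
          ((Complex.I • ((ContinuousLinearMap.apply ℝ (Fin 2 → ℂ) (Pi.single ν 1)).comp
              (fderiv ℝ (fderiv ℝ ψ) x)))
            - (((A ν x : ℂ)) • fderiv ℝ ψ x
                + (Complex.ofRealCLM.comp (D ν)).smulRight (ψ x))))
        - (m : ℂ) • fderiv ℝ ψ x) x := by
    have := HasFDerivAt.sub
      (HasFDerivAt.sum (fun ν (_ : ν ∈ Finset.univ) =>
        ((mvCLM (gamma s ν)).hasFDerivAt.comp x
          (((hpd ν).const_smul Complex.I).sub ((hcA ν).smul hψ')))))
      (hψ'.const_smul (m : ℂ))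
    exact this
  -- derivative of the boost operator applied to ψ
  have hK : HasFDerivAt (boostOp ψ)
      ((Complex.I • ((x 0 • ((ContinuousLinearMap.apply ℝ (Fin 2 → ℂ) (Pi.single 2 1)).comp
              (fderiv ℝ (fderiv ℝ ψ) x)) + (pr 0).smulRight (pdC 2 ψ x))
          + (x 2 • ((ContinuousLinearMap.apply ℝ (Fin 2 → ℂ) (Pi.single 0 1)).comp
              (fderiv ℝ (fderiv ℝ ψ) x)) + (pr 2).smulRight (pdC 0 ψ x))))
        - (Complex.I / 2) • ((mvCLM pauli1).comp (fderiv ℝ ψ x))) x := by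
    have h0 : HasFDerivAt (fun y : Fin 3 → ℝ => y 0) (pr 0) x := (pr 0).hasFDerivAt
    have h2 : HasFDerivAt (fun y : Fin 3 → ℝ => y 2) (pr 2) x := (pr 2).hasFDerivAt
    have := HasFDerivAt.sub
      (((h0.smul (hpd 2)).add (h2.smul (hpd 0))).const_smul Complex.I)
      (((mvCLM pauli1).hasFDerivAt.comp x hψ').const_smul (Complex.I / 2))
    exact this
  -- the two sides
  have hpdF : ∀ μ : Fin 3, pdC μ (diracOp s A m ψ) x
      = ((∑ ν, (mvCLM (gamma s ν)).comp
          ((Complex.I • ((ContinuousLinearMap.apply ℝ (Fin 2 → ℂ) (Pi.single ν 1)).comp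
              (fderiv ℝ (fderiv ℝ ψ) x)))
            - (((A ν x : ℂ)) • fderiv ℝ ψ x
                + (Complex.ofRealCLM.comp (D ν)).smulRight (ψ x))))
        - (m : ℂ) • fderiv ℝ ψ x) (Pi.single μ 1) := by
    intro μ
    rw [pdC, hF.fderiv]
  have hpdK : ∀ ν : Fin 3, pdC ν (boostOp ψ) x
      = ((Complex.I • ((x 0 • ((ContinuousLinearMap.apply ℝ (Fin 2 → ℂ) (Pi.single 2 1)).comp
              (fderiv ℝ (fderiv ℝ ψ) x)) + (pr 0).smulRight (pdC 2 ψ x))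
          + (x 2 • ((ContinuousLinearMap.apply ℝ (Fin 2 → ℂ) (Pi.single 0 1)).comp
              (fderiv ℝ (fderiv ℝ ψ) x)) + (pr 2).smulRight (pdC 0 ψ x))))
        - (Complex.I / 2) • ((mvCLM pauli1).comp (fderiv ℝ ψ x))) (Pi.single ν 1) := by
    intro ν
    rw [pdC, hK.fderiv]
  conv_lhs => rw [boostOp]
  rw [hpdF 2, hpdF 0]
  conv_rhs => rw [diracOp, Fin.sum_univ_three]
  rw [hpdK 0, hpdK 1, hpdK 2]
  simp only [diracOp, boostOp, Fin.sum_univ_three,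
    ContinuousLinearMap.sub_apply, ContinuousLinearMap.add_apply,
    ContinuousLinearMap.coe_sum', Finset.sum_apply,
    ContinuousLinearMap.coe_comp', Function.comp_apply,
    ContinuousLinearMap.coe_smul', Pi.smul_apply, ContinuousLinearMap.smul_apply,
    ContinuousLinearMap.smulRight_apply, ContinuousLinearMap.apply_apply,
    Complex.ofRealCLM_apply, ContinuousLinearMap.proj_apply, mvCLM_apply,
    Pi.single_eq_same, Pi.single_eq_of_ne (show (0:Fin 3) ≠ 2 by decide),
    Pi.single_eq_of_ne (show (2:Fin 3) ≠ 0 by decide),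
    Pi.single_eq_of_ne (show (1:Fin 3) ≠ 0 by decide),
    Pi.single_eq_of_ne (show (1:Fin 3) ≠ 2 by decide)]
  rw [hsymm (Pi.single 0 1) (Pi.single 2 1), hsymm (Pi.single 1 1) (Pi.single 2 1),
    hsymm (Pi.single 1 1) (Pi.single 0 1)]
  have hc0 : ((x 0 : ℂ)) * ((D 0) (Pi.single 2 1) : ℂ) + (x 2 : ℂ) * ((D 0) (Pi.single 0 1) : ℂ)
      = -((A 2 x : ℝ) : ℂ) := by
    exact_mod_cast congrArg Complex.ofReal (by simpa using hcomb 0)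
  have hc1 : ((x 0 : ℂ)) * ((D 1) (Pi.single 2 1) : ℂ) + (x 2 : ℂ) * ((D 1) (Pi.single 0 1) : ℂ)
      = 0 := by
    exact_mod_cast congrArg Complex.ofReal (by simpa using hcomb 1)
  have hc2 : ((x 0 : ℂ)) * ((D 2) (Pi.single 2 1) : ℂ) + (x 2 : ℂ) * ((D 2) (Pi.single 0 1) : ℂ)
      = -((A 0 x : ℝ) : ℂ) := by
    exact_mod_cast congrArg Complex.ofReal (by simpa using hcomb 2)
  funext i
  fin_cases i
  · simp only [pdC, gamma, pauli1, pauli2, pauli3, Fin.mk_zero, Fin.mk_one,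
      Matrix.smul_apply, Matrix.mulVec, Matrix.of_apply,
      dotProduct, Fin.sum_univ_two, Matrix.cons_val', Matrix.cons_val_zero,
      Matrix.cons_val_one, Matrix.head_cons, Matrix.head_fin_const, Matrix.empty_val',
      Matrix.cons_val_fin_one, Pi.add_apply, Pi.sub_apply, Pi.smul_apply, smul_eq_mul,
      Complex.real_smul, Matrix.cons_val_two, Matrix.tail_cons, one_smul, zero_smul,
      Pi.single_eq_same, Pi.single_eq_of_ne (show (0:Fin 3) ≠ 1 by decide),
      Pi.single_eq_of_ne (show (2:Fin 3) ≠ 1 by decide), add_zero, zero_add,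
      Complex.ofReal_zero, zero_mul, mul_zero, one_mul, neg_mul, mul_one, mul_neg]
    linear_combination (-Complex.I * ψ x 0) * hc0 +
      (-Complex.I * (Complex.I * (s : ℂ) * ψ x 1)) * hc1 + (-Complex.I * ψ x 1) * hc2 +
      (Complex.I * ((x 0 : ℂ) * ((D 2) (Pi.single 2 1) : ℂ) * ψ x 1 +
          ((A 2 x : ℝ) : ℂ) * ψ x 0 + (x 2 : ℂ) * ((D 2) (Pi.single 0 1) : ℂ) * ψ x 1) +
        Complex.I ^ 2 * ((fderiv ℝ ψ x) (Pi.single 0 1) 1 - (fderiv ℝ ψ x) (Pi.single 2 1) 0)) *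
        Complex.I_sq
  · simp only [pdC, gamma, pauli1, pauli2, pauli3, Fin.mk_zero, Fin.mk_one,
      Matrix.smul_apply, Matrix.mulVec, Matrix.of_apply,
      dotProduct, Fin.sum_univ_two, Matrix.cons_val', Matrix.cons_val_zero,
      Matrix.cons_val_one, Matrix.head_cons, Matrix.head_fin_const, Matrix.empty_val',
      Matrix.cons_val_fin_one, Pi.add_apply, Pi.sub_apply, Pi.smul_apply, smul_eq_mul,
      Complex.real_smul, Matrix.cons_val_two, Matrix.tail_cons, one_smul, zero_smul,
      Pi.single_eq_same, Pi.single_eq_of_ne (show (0:Fin 3) ≠ 1 by decide),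
      Pi.single_eq_of_ne (show (2:Fin 3) ≠ 1 by decide), add_zero, zero_add,
      Complex.ofReal_zero, zero_mul, mul_zero, one_mul, neg_mul, mul_one, mul_neg]
    linear_combination (Complex.I * ψ x 1) * hc0 +
      (-Complex.I * (Complex.I * (s : ℂ) * ψ x 0)) * hc1 + (Complex.I * ψ x 0) * hc2 +
      (-Complex.I * ((x 0 : ℂ) * ((D 2) (Pi.single 2 1) : ℂ) * ψ x 0 +
          ((A 2 x : ℝ) : ℂ) * ψ x 1 + (x 2 : ℂ) * ((D 2) (Pi.single 0 1) : ℂ) * ψ x 0) +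
        Complex.I ^ 2 * ((fderiv ℝ ψ x) (Pi.single 2 1) 1 - (fderiv ℝ ψ x) (Pi.single 0 1) 0)) *
        Complex.I_sq
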